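/- The function g(u) = ∑_{n=1}^∞ (1/n) χ^{*n}(u), with χ the indicator of [e, e²], is nonnegative, vanishes on [1, e), and on each interval (e^m, e^{m+1}) (m ≥ 1 an integer) agrees with a polynomial in log u of degree at most m - 1. -/

import Mathlib

open Complex

/-- Multiplicative convolution `(f*h)(x) = ∫₁^x f(x/u) h(u) du/u`. -/
noncomputable def mconv (f h : ℝ → ℝ) : ℝ → ℝ := fun x => ∫ u in (1:ℝ)..x, f (x / u) * h u / u

/-- `χ`, the indicator function of `[e, e²]`. -/
noncomputable def chi : ℝ → ℝ := Set.indicator (Set.Icc (Real.exp 1) (Real.exp 2)) 1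

/-- `chiPow n = χ^{*(n+1)}`. -/
noncomputable def chiPow : ℕ → (ℝ → ℝ)
  | 0 => chi
  | n + 1 => mconv (chiPow n) chi

/-- `g(u) = ∑_{n≥1} χ^{*n}(u)/n`. -/
noncomputable def g (u : ℝ) : ℝ := ∑' n : ℕ, chiPow n u / (n + 1)

/-!
In the coordinate `s = log u`, convolution with `χ` acts on functions vanishing on `(-∞, 1)` as
`F ↦ (L ↦ ∫_{L-2}^{L-1} F)`. This operation takes a function that is a polynomial of degree `≤ n`
on every interval `(k, k + 1)`, `k ∈ ℤ`, to one of degree `≤ n + 1`: for `L ∈ (m, m + 1)` the window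
meets only the pieces `(m - 2, m - 1)` and `(m - 1, m)`, each contributing a difference of values of
an antiderivative. As `χ^{*(n+1)}` vanishes below `e^{n+1}`, only the terms `n < m` of the series
for `g` survive on `(e^m, e^{m+1})`.
-/

open Polynomial MeasureTheory Set

theorem Polynomial.exists_derivative_eq {K : Type*} [Field K] [CharZero K] (p : K[X]) :
    ∃ P : K[X], derivative P = p ∧ P.natDegree ≤ p.natDegree + 1 := by
  refine ⟨∑ i ∈ Finset.range (p.natDegree + 1), C (p.coeff i / (i + 1)) * X ^ (i + 1), ?_, ?_⟩
  · conv_rhs => rw [p.as_sum_range_C_mul_X_pow]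
    refine (derivative_sum).trans (Finset.sum_congr rfl fun i _ => ?_)
    rw [derivative_C_mul_X_pow, ← Nat.cast_succ,
      div_mul_cancel₀ _ (Nat.cast_ne_zero.2 i.succ_ne_zero)]
    rfl
  · refine natDegree_sum_le_of_forall_le _ _ fun i hi => (natDegree_C_mul_X_pow_le _ _).trans ?_
    have := Finset.mem_range.1 hi
    omega

def IsPiecewisePolynomial (n : ℕ) (F : ℝ → ℝ) : Prop :=
  ∀ k : ℤ, ∃ p : ℝ[X], p.natDegree ≤ n ∧ EqOn F (fun s => p.eval s) (Ioo (k : ℝ) (k + 1))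

theorem isPiecewisePolynomial_indicator_Icc (a b : ℤ) :
    IsPiecewisePolynomial 0 ((Icc (a : ℝ) b).indicator 1) := by
  intro k
  by_cases hk : a ≤ k ∧ k + 1 ≤ b
  · refine ⟨C 1, (natDegree_C 1).le, fun s hs => ?_⟩
    have hab : (a : ℝ) ≤ k ∧ (k : ℝ) + 1 ≤ b := by exact_mod_cast hk
    have hs' : s ∈ Icc (a : ℝ) b := ⟨by linarith [hs.1], by linarith [hs.2]⟩
    simp [indicator_of_mem hs']
  · refine ⟨0, natDegree_zero.le, fun s hs => ?_⟩
    have hab : (k : ℝ) + 1 ≤ a ∨ (b : ℝ) ≤ k := by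
      rcases not_and_or.1 hk with h | h
      · exact Or.inl (by exact_mod_cast (by omega : k + 1 ≤ a))
      · exact Or.inr (by exact_mod_cast (by omega : b ≤ k))
    refine (indicator_of_notMem (fun h => ?_) _).trans eval_zero.symm
    rcases hab with hab | hab <;> linarith [hs.1, hs.2, h.1, h.2]

namespace IsPiecewisePolynomial

variable {n : ℕ} {F : ℝ → ℝ}

theorem exists_integral_eq_sub (hF : IsPiecewisePolynomial n F) (k : ℤ) :
    ∃ P : ℝ[X], P.natDegree ≤ n + 1 ∧ ∀ a ∈ Icc (k : ℝ) (k + 1), ∀ b ∈ Icc (k : ℝ) (k + 1),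
      IntervalIntegrable F volume a b ∧ ∫ x in a..b, F x = P.eval b - P.eval a := by
  obtain ⟨p, hpn, hp⟩ := hF k
  obtain ⟨P, rfl, hPn⟩ := p.exists_derivative_eq
  refine ⟨P, by omega, fun a ha b hb => ?_⟩
  have hFP : EqOn F (fun x => (derivative P).eval x) (uIoo a b) :=
    hp.mono (uIoo_subset_Ioo ha hb)
  have hp_int := P.derivative.continuous.intervalIntegrable (μ := volume) a b
  refine ⟨(intervalIntegrable_congr_uIoo hFP).2 hp_int, ?_⟩
  rw [intervalIntegral.integral_congr_uIoo hFP]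
  exact intervalIntegral.integral_eq_sub_of_hasDerivAt (fun x _ => P.hasDerivAt x) hp_int

theorem integral_window (hF : IsPiecewisePolynomial n F) :
    IsPiecewisePolynomial (n + 1) (fun L => ∫ s in L - 2..L - 1, F s) := by
  intro m
  obtain ⟨P₁, hP₁n, hP₁⟩ := hF.exists_integral_eq_sub (m - 2)
  obtain ⟨P₂, hP₂n, hP₂⟩ := hF.exists_integral_eq_sub (m - 1)
  push_cast at hP₁ hP₂
  refine ⟨P₂.comp (X - C 1) - P₁.comp (X - C 2) + C (P₁.eval ((m : ℝ) - 1) - P₂.eval ((m : ℝ) - 1)),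
    ?_, fun L ⟨hmL, hLm⟩ => ?_⟩
  · refine natDegree_add_le_of_degree_le ((natDegree_sub_le_of_le ?_ ?_).trans (max_self _).le)
      (by simp) <;> refine natDegree_comp_le.trans ?_ <;> rwa [natDegree_X_sub_C, mul_one]
  · have h₁ := hP₁ (L - 2) ⟨by linarith, by linarith⟩ (m - 1) ⟨by linarith, by linarith⟩
    have h₂ := hP₂ (m - 1) ⟨by linarith, by linarith⟩ (L - 1) ⟨by linarith, by linarith⟩
    simp only [← intervalIntegral.integral_add_adjacent_intervals h₁.1 h₂.1, h₁.2, h₂.2,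
      eval_add, eval_sub, eval_comp, eval_X, eval_C]
    ring

end IsPiecewisePolynomial

theorem chi_comp_exp : chi ∘ Real.exp = (Icc (1 : ℝ) 2).indicator 1 := by
  ext t
  simp [chi, indicator_apply, Real.exp_le_exp]

theorem mconv_chi_eq_integral {f : ℝ → ℝ} (hf : ∀ y < 1, f y = 0) (x : ℝ) :
    mconv f chi x = ∫ t in (1 : ℝ)..2, f (x / Real.exp t) := by
  have hsupp : Function.support (fun u => f (x / u) * chi u / u) ⊆ Ioc 1 x := by
    intro u hu
    have hchi : u ∈ Icc (Real.exp 1) (Real.exp 2) := by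
      by_contra h
      simp [chi, h] at hu
    have hu1 : 1 < u := (Real.one_lt_exp_iff.2 one_pos).trans_le hchi.1
    refine ⟨hu1, not_lt.1 fun hxu => hu ?_⟩
    simp [hf _ ((div_lt_one (by linarith)).2 hxu)]
  calc mconv f chi x = ∫ u, f (x / u) * chi u / u :=
        intervalIntegral.integral_eq_integral_of_support_subset hsupp
    _ = ∫ u in Icc (Real.exp 1) (Real.exp 2), f (x / u) / u := by
        rw [← setIntegral_eq_integral_of_forall_compl_eq_zero
          (s := Icc (Real.exp 1) (Real.exp 2)) fun u hu => by simp [chi, hu]]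
        exact setIntegral_congr_fun measurableSet_Icc fun u hu => by simp [chi, hu]
    _ = ∫ t in Icc 1 2, Real.exp t • (f (x / Real.exp t) / Real.exp t) := by
        rw [← Real.image_exp_Icc]
        exact integral_image_eq_integral_deriv_smul_of_monotoneOn measurableSet_Icc
          (fun t _ => (Real.hasDerivAt_exp t).hasDerivWithinAt) (Real.exp_monotone.monotoneOn _) _
    _ = ∫ t in (1 : ℝ)..2, f (x / Real.exp t) := by
        rw [intervalIntegral.integral_of_le one_le_two, ← integral_Icc_eq_integral_Ioc]
        refine setIntegral_congr_fun measurableSet_Icc fun t _ => ?_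
        simp [mul_div_cancel₀, (Real.exp_pos t).ne']

theorem chiPow_eq_zero_of_lt (n : ℕ) {u : ℝ} (hu : u < Real.exp (n + 1)) : chiPow n u = 0 := by
  induction n generalizing u with
  | zero =>
    refine indicator_of_notMem (fun h => ?_) _
    simp only [CharP.cast_eq_zero, zero_add] at hu
    linarith [h.1]
  | succ n ih =>
    have hf : ∀ y < 1, chiPow n y = 0 :=
      fun _ hy => ih (hy.trans_le (Real.one_le_exp (by positivity)))
    rw [chiPow, mconv_chi_eq_integral hf]
    refine (intervalIntegral.integral_congr (g := 0) fun t ht => ih ?_).trans (by simp)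
    rw [uIcc_of_le one_le_two] at ht
    rw [div_lt_iff₀ (Real.exp_pos t), ← Real.exp_add]
    exact hu.trans_le (Real.exp_le_exp.2 (by push_cast; linarith [ht.1]))

theorem chiPow_succ_eq_integral (n : ℕ) (x : ℝ) :
    chiPow (n + 1) x = ∫ t in (1 : ℝ)..2, chiPow n (x / Real.exp t) :=
  mconv_chi_eq_integral
    (fun _ hy => chiPow_eq_zero_of_lt n (hy.trans_le (Real.one_le_exp (by positivity)))) x

theorem chiPow_nonneg (n : ℕ) (x : ℝ) : 0 ≤ chiPow n x := by
  induction n generalizing x with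
  | zero => exact indicator_nonneg (fun _ _ => zero_le_one) x
  | succ n ih =>
    rw [chiPow_succ_eq_integral]
    exact intervalIntegral.integral_nonneg one_le_two fun t _ => ih _

theorem isPiecewisePolynomial_chiPow_exp (n : ℕ) :
    IsPiecewisePolynomial n (fun s => chiPow n (Real.exp s)) := by
  induction n with
  | zero =>
    have h := isPiecewisePolynomial_indicator_Icc 1 2
    rw [Int.cast_one, Int.cast_ofNat, ← chi_comp_exp] at h
    exact h
  | succ n ih =>
    convert ih.integral_window using 2 with s
    simp_rw [chiPow_succ_eq_integral, ← Real.exp_sub]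
    exact intervalIntegral.integral_comp_sub_left (fun r => chiPow n (Real.exp r)) s

theorem g_eq_sum_of_lt_exp (m : ℕ) {u : ℝ} (hu : u < Real.exp (m + 1)) :
    g u = ∑ n ∈ Finset.range m, chiPow n u / (n + 1) := by
  refine tsum_eq_sum fun n hn => ?_
  rw [chiPow_eq_zero_of_lt n (hu.trans_le (Real.exp_le_exp.2 ?_)), zero_div]
  have : (m : ℝ) ≤ n := by exact_mod_cast not_lt.1 (Finset.mem_range.not.1 hn)
  linarith

/-- `g` is nonnegative, vanishes on `[1, e)`, and on each interval `(e^m, e^{m+1})`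
agrees with a polynomial in `log u` of degree at most `m - 1`. -/
theorem g_structure :
    (∀ u : ℝ, 0 ≤ g u) ∧
    (∀ u ∈ Set.Ico (1:ℝ) (Real.exp 1), g u = 0) ∧
    (∀ m : ℕ, 1 ≤ m → ∃ p : Polynomial ℝ, p.natDegree ≤ m - 1 ∧
      ∀ u ∈ Set.Ioo (Real.exp m) (Real.exp (m + 1)), g u = p.eval (Real.log u)) := by
  refine ⟨fun u => tsum_nonneg fun n => div_nonneg (chiPow_nonneg n u) (by positivity),
    fun u hu => by simpa using g_eq_sum_of_lt_exp 0 (by simpa using hu.2), fun m _ => ?_⟩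
  choose p hp_deg hp using fun n => isPiecewisePolynomial_chiPow_exp n m
  refine ⟨∑ n ∈ Finset.range m, C ((n + 1 : ℝ)⁻¹) * p n, ?_, fun u ⟨hmu, hum⟩ => ?_⟩
  · refine natDegree_sum_le_of_forall_le _ _ fun n hn => (natDegree_C_mul_le _ _).trans ?_
    have := Finset.mem_range.1 hn
    exact (hp_deg n).trans (by omega)
  · have hu : 0 < u := (Real.exp_pos _).trans hmu
    have hlog : Real.log u ∈ Ioo ((m : ℤ) : ℝ) ((m : ℤ) + 1) := by
      push_cast
      exact ⟨(Real.lt_log_iff_exp_lt hu).2 hmu, (Real.log_lt_iff_lt_exp hu).2 hum⟩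
    rw [g_eq_sum_of_lt_exp m hum, eval_finsetSum]
    refine Finset.sum_congr rfl fun n _ => ?_
    have h := hp n hlog
    simp only [Real.exp_log hu] at h
    rw [h, eval_mul, eval_C, div_eq_inv_mul]
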